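/- arXiv:2410.15370 — 2 statements merged into one kernel-verified Lean document; each statement's English description precedes it below -/
import Mathlib

section
/- Let r₀ > r₁ ≥ 1 be coprime integers with Hirzebruch–Jung data a_i = ⌈r_{i−1}/r_i⌉, r_{i+1} = a_i·r_i − r_{i−1}, terminating at r_l = 1 with l ≥ 1, companion sequence P₀ = 0, P₁ = 1, P_{i+1} = a_i·P_i − P_{i−1}, and set k_i = (P_i + r_i)/r₀ − 1 for 1 ≤ i ≤ l. Then the following identity of rational numbers holds: ( ∑_{i=1}^{l} (−a_i)·k_i² + 2·∑_{i=1}^{l−1} k_i·k_{i+1} ) + l = 3l − ( r₁/r₀ + ∑_{i=1}^{l} a_i + P_l/r₀ ) + 2·(1 − 1/r₀). -/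
lemma aux_sum_stmt7 (b k : ℕ → ℚ) (n : ℕ) (hn : 1 ≤ n)
    (H : ∀ i, 1 ≤ i → i ≤ n → b i * k i = k (i - 1) + k (i + 1) + 2 - b i) :
    ∑ i ∈ Finset.Icc 1 n, (-(b i)) * (k i) ^ 2
      + 2 * ∑ i ∈ Finset.Icc 1 n, k i * k (i + 1)
    = -(k 0 * k 1) + k n * k (n + 1) - k 1 - k n + k 0 + k (n + 1)
      + 2 * (n : ℚ) - ∑ i ∈ Finset.Icc 1 n, b i := by
  induction n, hn using Nat.le_induction with
  | base =>
      have h1 := H 1 le_rfl le_rfl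
      simp only [Finset.Icc_self, Finset.sum_singleton] at *
      push_cast
      linear_combination (1 - k 1) * h1
  | succ n hn ih =>
      have hH : ∀ i, 1 ≤ i → i ≤ n → b i * k i = k (i - 1) + k (i + 1) + 2 - b i :=
        fun i h1 h2 => H i h1 (h2.trans (Nat.le_succ n))
      have key := ih hH
      have hs : (1:ℕ) ≤ n + 1 := by omega
      rw [Finset.sum_Icc_succ_top hs, Finset.sum_Icc_succ_top hs, Finset.sum_Icc_succ_top hs]
      have hnew := H (n + 1) (by omega) le_rfl
      simp only [Nat.add_sub_cancel] at hnew
      push_cast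
      linear_combination key + (1 - k (n + 1)) * hnew

/-- With Hirzebruch–Jung data `(r, a)` for coprime `r 0 > r 1 ≥ 1` terminating at
`r l = 1` (`l ≥ 1`), companion sequence `P`, and `k i = (P i + r i) / r 0 - 1`,
the identity
`(∑_{i=1}^{l} (-a i) * (k i)² + 2 ∑_{i=1}^{l-1} k i * k (i+1)) + l
  = 3l - (r 1 / r 0 + ∑_{i=1}^{l} a i + P l / r 0) + 2 (1 - 1 / r 0)`
holds in `ℚ`. -/
theorem stmt_7 (r a P : ℕ → ℤ) (l : ℕ) (hl : 1 ≤ l)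
    (h1 : 1 ≤ r 1) (h01 : r 1 < r 0)
    (hcop : Int.gcd (r 0) (r 1) = 1)
    (ha : ∀ i, 1 ≤ i → i ≤ l → a i = ⌈(r (i - 1) : ℚ) / (r i : ℚ)⌉)
    (hr : ∀ i, 1 ≤ i → i ≤ l → r (i + 1) = a i * r i - r (i - 1))
    (hgt : ∀ i < l, 1 < r i) (hrl : r l = 1)
    (hP0 : P 0 = 0) (hP1 : P 1 = 1)
    (hP : ∀ i, 1 ≤ i → i ≤ l → P (i + 1) = a i * P i - P (i - 1))
    (k : ℕ → ℚ) (hk : ∀ i, k i = ((P i : ℚ) + (r i : ℚ)) / (r 0 : ℚ) - 1) :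
    (∑ i ∈ Finset.Icc 1 l, (-(a i : ℚ)) * (k i) ^ 2
        + 2 * ∑ i ∈ Finset.Icc 1 (l - 1), k i * k (i + 1)) + (l : ℚ)
      = 3 * (l : ℚ)
          - ((r 1 : ℚ) / (r 0 : ℚ) + ∑ i ∈ Finset.Icc 1 l, (a i : ℚ) + (P l : ℚ) / (r 0 : ℚ))
          + 2 * (1 - 1 / (r 0 : ℚ)) := by
  have hr0 : (1:ℤ) < r 0 := lt_of_le_of_lt h1 h01
  have hq : ((r 0 : ℚ)) ≠ 0 := Int.cast_ne_zero.mpr (by linarith)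
  -- invariant P(i+1) r i - P i r (i+1) = r 0
  have hinv : ∀ i, i ≤ l → P (i+1) * r i - P i * r (i+1) = r 0 := by
    intro i
    induction i with
    | zero => intro _; rw [hP0, hP1]; ring
    | succ j ihj =>
        intro hle
        have hprev := ihj (Nat.le_of_succ_le hle)
        have h1j : 1 ≤ j + 1 := by omega
        rw [hP (j+1) h1j hle, hr (j+1) h1j hle]
        simp only [Nat.add_sub_cancel]
        linear_combination hprev
  have hal : a l = r (l - 1) := by
    rw [ha l hl le_rfl, hrl]
    norm_num
  have hrl1 : r (l + 1) = 0 := by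
    have := hr l hl le_rfl
    rw [hrl, hal] at this
    omega
  have hPl1 : P (l + 1) = r 0 := by
    have := hinv l le_rfl
    rw [hrl, hrl1] at this
    omega
  have hk0 : k 0 = 0 := by
    rw [hk, hP0]
    push_cast
    field_simp
    ring
  have hkl1 : k (l + 1) = 0 := by
    rw [hk, hPl1, hrl1]
    push_cast
    field_simp
    ring
  have H : ∀ i, 1 ≤ i → i ≤ l →
      (fun i => (a i : ℚ)) i * k i = k (i - 1) + k (i + 1) + 2 - (fun i => (a i : ℚ)) i := by
    intro i h1i hil
    have hri := hr i h1i hil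
    have hPi := hP i h1i hil
    have hc : ((P (i+1) : ℚ) + (r (i+1) : ℚ))
        = (a i : ℚ) * ((P i : ℚ) + (r i : ℚ)) - ((P (i-1) : ℚ) + (r (i-1) : ℚ)) := by
      rw [hri, hPi]; push_cast; ring
    simp only [hk]
    field_simp
    linear_combination -hc
  have key := aux_sum_stmt7 (fun i => (a i : ℚ)) k l hl H
  have hsplit : ∑ i ∈ Finset.Icc 1 l, k i * k (i + 1)
      = ∑ i ∈ Finset.Icc 1 (l - 1), k i * k (i + 1) := by
    conv_lhs => rw [show l = (l - 1) + 1 from by omega]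
    rw [Finset.sum_Icc_succ_top (by omega)]
    rw [show l - 1 + 1 = l from by omega, hkl1]
    ring
  rw [hsplit] at key
  rw [key]
  have hk1 : k 1 = ((r 1 : ℚ) + 1) / (r 0 : ℚ) - 1 := by
    rw [hk, hP1]; push_cast; ring
  have hkl : k l = ((P l : ℚ) + 1) / (r 0 : ℚ) - 1 := by
    rw [hk, hrl]; push_cast; ring
  rw [hk0, hkl1, hk1, hkl]
  field_simp
  ring
end

section
/- Let p ≥ 2 and r ≥ 1 be integers and set e = p^r. Let m₀, …, m_{r−1} be natural numbers, and for each 0 ≤ i ≤ r−1 and 1 ≤ j ≤ m_i let a_{ij}, b_{ij}, sw_{ij} be rational numbers; let χ, χ̄, sw, Sw be rational numbers. Assume: (1) ∑_{i,j} p^i·b_{ij} − (e − 1 + sw)·χ − e·( ∑_{i,j} a_{ij} + χ̄ − χ + Sw ) = ∑_{i,j} p^i·( b_{ij} − 2·(p^{r−i} − 1 + sw_{ij}) − p^{r−i}·a_{ij} ); and (2) −χ/e = −χ̄ + 2·∑_{i=0}^{r−1} m_i·(1 − 1/p^{r−i}). Then ( χ̄ − 2·∑_{i=0}^{r−1} m_i·(1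 − 1/p^{r−i}) )·sw − 2·∑_{i,j} sw_{ij}/p^{r−i} = −Sw. -/
/-- Arithmetic content of the key identity in the wild potential good reduction
case: with `e = p ^ r`, counts `m i` of singular points of type `i`, local data
`a i j`, `b i j`, local Swan conductors `sw i j`, global Swan conductor `sw` of
`K'/K` and `Sw = Sw(C)`, hypothesis (1) (comparison of localized Chern classes)
and (2) (Riemann–Hurwitz) imply
`(χ̄ - 2 ∑ m i (1 - 1/p^(r-i))) * sw - 2 ∑∑ sw i j / p^(r-i) = - Sw`. -/
theorem stmt_11 (p r : ℕ) (hp : 2 ≤ p) (hr : 1 ≤ r)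
    (m : ℕ → ℕ) (a b sw : ℕ → ℕ → ℚ)
    (chi chibar swK SwC : ℚ)
    (h1 : (∑ i ∈ Finset.range r, ∑ j ∈ Finset.Icc 1 (m i), (p : ℚ) ^ i * b i j)
          - ((p : ℚ) ^ r - 1 + swK) * chi
          - (p : ℚ) ^ r *
              ((∑ i ∈ Finset.range r, ∑ j ∈ Finset.Icc 1 (m i), a i j)
                + chibar - chi + SwC)
        = ∑ i ∈ Finset.range r, ∑ j ∈ Finset.Icc 1 (m i),
            (p : ℚ) ^ i *
              (b i j - 2 * ((p : ℚ) ^ (r - i) - 1 + sw i j) - (p : ℚ) ^ (r - i) * a i j))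
    (h2 : -chi / (p : ℚ) ^ r
        = -chibar + 2 * ∑ i ∈ Finset.range r, (m i : ℚ) * (1 - 1 / (p : ℚ) ^ (r - i))) :
    (chibar - 2 * ∑ i ∈ Finset.range r, (m i : ℚ) * (1 - 1 / (p : ℚ) ^ (r - i))) * swK
        - 2 * ∑ i ∈ Finset.range r, ∑ j ∈ Finset.Icc 1 (m i), sw i j / (p : ℚ) ^ (r - i)
      = -SwC := by
  have hp0 : (p : ℚ) ≠ 0 := by
    have : p ≠ 0 := by omega
    exact_mod_cast this
  have he : ((p : ℚ)) ^ r ≠ 0 := pow_ne_zero _ hp0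
  -- rewrite the inner sums of the RHS of h1
  have inner : ∀ i ∈ Finset.range r,
      (∑ j ∈ Finset.Icc 1 (m i), (p : ℚ) ^ i *
          (b i j - 2 * ((p : ℚ) ^ (r - i) - 1 + sw i j) - (p : ℚ) ^ (r - i) * a i j))
      = (∑ j ∈ Finset.Icc 1 (m i), (p : ℚ) ^ i * b i j)
        - 2 * ((m i : ℚ) * ((p : ℚ) ^ r - (p : ℚ) ^ i))
        - (p : ℚ) ^ r * (∑ j ∈ Finset.Icc 1 (m i), a i j)
        - 2 * ((∑ j ∈ Finset.Icc 1 (m i), sw i j / (p : ℚ) ^ (r - i)) * (p : ℚ) ^ r) := by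
    intro i hi
    have hir : i + (r - i) = r := by
      have := Finset.mem_range.mp hi; omega
    have hp1 : (p : ℚ) ^ i * (p : ℚ) ^ (r - i) = (p : ℚ) ^ r := by
      rw [← pow_add, hir]
    have hpri : ((p : ℚ)) ^ (r - i) ≠ 0 := pow_ne_zero _ hp0
    have hm : ((m i : ℚ) * ((p : ℚ) ^ r - (p : ℚ) ^ i))
        = ∑ _j ∈ Finset.Icc 1 (m i), ((p : ℚ) ^ r - (p : ℚ) ^ i) := by
      rw [Finset.sum_const, Nat.card_Icc, nsmul_eq_mul]
      norm_num
    rw [hm, Finset.mul_sum, Finset.mul_sum, Finset.sum_mul, Finset.mul_sum,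
        ← Finset.sum_sub_distrib, ← Finset.sum_sub_distrib, ← Finset.sum_sub_distrib]
    refine Finset.sum_congr rfl fun j _ => ?_
    have hdiv : sw i j / (p : ℚ) ^ (r - i) * (p : ℚ) ^ r = (p : ℚ) ^ i * sw i j := by
      rw [← hp1]; field_simp
    rw [hdiv]
    linear_combination (-(2 : ℚ) - a i j) * hp1
  rw [Finset.sum_congr rfl inner] at h1
  -- split the outer sum into four sums
  rw [Finset.sum_sub_distrib, Finset.sum_sub_distrib, Finset.sum_sub_distrib,
      ← Finset.mul_sum, ← Finset.mul_sum, ← Finset.mul_sum, ← Finset.sum_mul] at h1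
  -- relate the two "m" sums
  have hM : (∑ i ∈ Finset.range r, (m i : ℚ) * (1 - 1 / (p : ℚ) ^ (r - i))) * (p : ℚ) ^ r
      = ∑ i ∈ Finset.range r, (m i : ℚ) * ((p : ℚ) ^ r - (p : ℚ) ^ i) := by
    rw [Finset.sum_mul]
    refine Finset.sum_congr rfl fun i hi => ?_
    have hir : i + (r - i) = r := by
      have := Finset.mem_range.mp hi; omega
    have hp1 : (p : ℚ) ^ i * (p : ℚ) ^ (r - i) = (p : ℚ) ^ r := by
      rw [← pow_add, hir]
    have hpri : ((p : ℚ)) ^ (r - i) ≠ 0 := pow_ne_zero _ hp0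
    field_simp
    linear_combination (m i : ℚ) * hp1
  -- chi in terms of chibar and the m-sum
  rw [div_eq_iff he] at h2
  have hchi : chi = (p : ℚ) ^ r * chibar
      - 2 * (p : ℚ) ^ r * ∑ i ∈ Finset.range r, (m i : ℚ) * (1 - 1 / (p : ℚ) ^ (r - i)) := by
    linear_combination -h2
  refine mul_right_cancel₀ he ?_
  linear_combination -(h1) + (1 - swK) * hchi - 2 * hM
end
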